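/- arXiv:0709.0943 — 8 statements merged into one kernel-verified Lean document; each statement's English description precedes it below -/
import Mathlib

section
/- Let R be a commutative ring of prime characteristic p, W a multiplicatively closed subset, I, J ideals of R, and q = p^e. Then the localization of the Frobenius power of the colon ideal satisfies ((I : J)^{[q]})_W = ((I_W : J_W))^{[q]}, i.e., the localization at W of (I:J)^{[q]} equals the Frobenius power of the colon ideal of the localized ideals. -/
open IsLocalRing

/-- The `q`-th Frobenius power of an ideal: the ideal generated by `q`-th powers of its elements. -/
def Ideal.fpow {R : Type*} [CommRing R] (I : Ideal R) (q : ℕ) : Ideal R :=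
  Ideal.span ((· ^ q) '' (I : Set R))

lemma pow_mem_span_pow {S : Type*} [CommRing S] (p : ℕ) (hp : p.Prime) [CharP S p] (e : ℕ)
    (s : Set S) {x : S} (hx : x ∈ Ideal.span s) :
    x ^ p ^ e ∈ Ideal.span ((· ^ p ^ e) '' s) := by
  haveI : Fact p.Prime := ⟨hp⟩
  induction hx using Submodule.span_induction with
  | mem y hy => exact Ideal.subset_span ⟨y, hy, rfl⟩
  | zero =>
    rw [zero_pow (pow_ne_zero _ hp.ne_zero)]
    exact zero_mem _
  | add y z _ _ hy hz =>
    rw [add_pow_char_pow]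
    exact add_mem hy hz
  | smul a y _ hy =>
    rw [smul_eq_mul, mul_pow]
    exact Ideal.mul_mem_left _ _ hy

lemma fpow_map {R S : Type*} [CommRing R] [CommRing S] (f : R →+* S)
    (p : ℕ) (hp : p.Prime) [CharP S p] (I : Ideal R) (e : ℕ) :
    Ideal.map f (I.fpow (p ^ e)) = (Ideal.map f I).fpow (p ^ e) := by
  unfold Ideal.fpow
  rw [Ideal.map_span, Set.image_image]
  have himg : ((fun x => f (x ^ p ^ e)) '' (I : Set R)) = ((· ^ p ^ e) '' (f '' (I : Set R))) := by
    rw [Set.image_image]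
    simp [map_pow]
  rw [himg]
  apply le_antisymm
  · apply Ideal.span_mono
    apply Set.image_mono
    intro x ⟨y, hy, hyx⟩
    exact hyx ▸ Ideal.mem_map_of_mem f hy
  · rw [Ideal.span_le]
    rintro z ⟨y, hy, rfl⟩
    exact pow_mem_span_pow p hp e _ hy

lemma colon_map (R Rₛ : Type*) [CommRing R] [CommRing Rₛ] [Algebra R Rₛ]
    (W : Submonoid R) [IsLocalization W Rₛ]
    (I J : Ideal R) (hJ : J.FG) :
    Ideal.map (algebraMap R Rₛ) (Submodule.colon I J) =
      Submodule.colon (Ideal.map (algebraMap R Rₛ) I) (Ideal.map (algebraMap R Rₛ) J) := by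
  classical
  set f := algebraMap R Rₛ with hf
  apply le_antisymm
  · rw [Ideal.map_le_iff_le_comap]
    intro r hr
    rw [Ideal.mem_comap, Submodule.mem_colon]
    intro y hy
    have : Ideal.map f J = Ideal.span (f '' (J : Set R)) := rfl
    rw [this] at hy
    induction hy using Submodule.span_induction with
    | mem z hz =>
      obtain ⟨j, hj, rfl⟩ := hz
      rw [smul_eq_mul, ← map_mul]
      exact Ideal.mem_map_of_mem f (Submodule.mem_colon.mp hr j hj)
    | zero => rw [smul_zero]; exact zero_mem _
    | add a b _ _ ha hb => rw [smul_add]; exact add_mem ha hb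
    | smul a z _ hz =>
      rw [smul_comm]
      exact Submodule.smul_mem _ _ hz
  · intro x hx
    obtain ⟨s, hs⟩ := hJ
    obtain ⟨⟨a, s₀⟩, hxa⟩ := IsLocalization.surj W x
    simp only [← hf] at hxa
    have key : ∀ j ∈ s, ∃ w : W, (w : R) * (a * j) ∈ I := by
      intro j hj
      have hjJ : j ∈ J := hs ▸ Ideal.subset_span hj
      have h1 : x * f j ∈ Ideal.map f I := by
        rw [Submodule.mem_colon] at hx
        have := hx (f j) (Ideal.mem_map_of_mem f hjJ)
        rwa [smul_eq_mul] at this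
      obtain ⟨⟨⟨y, hyI⟩, t⟩, ht⟩ := (IsLocalization.mem_map_algebraMap_iff W Rₛ).mp h1
      simp only [← hf] at ht
      have heq : f (a * j * ↑t) = f (y * ↑s₀) := by
        rw [map_mul, map_mul, map_mul, ← hxa, ← ht]; ring
      obtain ⟨c, hc⟩ := IsLocalization.exists_of_eq (M := W) heq
      refine ⟨c * t, ?_⟩
      have h2 : (↑(c * t) : R) * (a * j) = ↑c * (a * j * ↑t) := by push_cast; ring
      rw [h2, hc]
      have h3 : (↑c : R) * (y * ↑s₀) = ((↑c : R) * ↑s₀) * y := by ring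
      rw [h3]
      exact I.mul_mem_left _ hyI
    choose wf hwf using key
    set w : W := ∏ j ∈ s.attach, wf j j.2 with hw
    have hwj : ∀ j ∈ s, (w : R) * (a * j) ∈ I := by
      intro j hj
      have hsplit : w = wf j hj * ∏ x ∈ s.attach.erase ⟨j, hj⟩, wf x x.2 := by
        rw [hw, ← Finset.mul_prod_erase s.attach _ (Finset.mem_attach s ⟨j, hj⟩)]
      have : (w : R) * (a * j) =
          (↑(∏ x ∈ s.attach.erase ⟨j, hj⟩, wf x x.2) : R) * ((wf j hj : R) * (a * j)) := by
        rw [hsplit]; push_cast; ring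
      rw [this]
      exact I.mul_mem_left _ (hwf j hj)
    have hwa : (w : R) * a ∈ Submodule.colon I J := by
      rw [Submodule.mem_colon]
      intro y hy
      rw [← hs] at hy
      induction hy using Submodule.span_induction with
      | mem z hz =>
        rw [smul_eq_mul, mul_assoc]
        exact hwj z hz
      | zero => rw [smul_zero]; exact zero_mem _
      | add u v _ _ hu hv => rw [smul_add]; exact add_mem hu hv
      | smul r z _ hz => rw [smul_comm]; exact Submodule.smul_mem _ _ hz
    apply (IsLocalization.mem_map_algebraMap_iff W Rₛ).mpr
    refine ⟨⟨⟨(w : R) * a, hwa⟩, w * s₀⟩, ?_⟩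
    simp only [Submonoid.coe_mul, map_mul, ← hf]
    rw [show x * (f ↑w * f ↑s₀) = x * f ↑s₀ * f ↑w from by ring, hxa]
    ring

theorem stmt2 (R Rₛ : Type*) [CommRing R] [CommRing Rₛ] [Algebra R Rₛ]
    (W : Submonoid R) [IsLocalization W Rₛ]
    (p : ℕ) (hp : p.Prime) [CharP R p]
    (I J : Ideal R) (hJ : J.FG) (e : ℕ) :
    Ideal.map (algebraMap R Rₛ) (Ideal.fpow (Submodule.colon I J) (p ^ e)) =
      Ideal.fpow
        (Submodule.colon (Ideal.map (algebraMap R Rₛ) I) (Ideal.map (algebraMap R Rₛ) J))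
        (p ^ e) := by
  rcases subsingleton_or_nontrivial Rₛ with h | h
  · exact Subsingleton.elim _ _
  · haveI : CharP Rₛ p := by
      have h0 : (p : Rₛ) = 0 := by
        rw [← map_natCast (algebraMap R Rₛ) p, CharP.cast_eq_zero, map_zero]
      have hd : ringChar Rₛ ∣ p := ringChar.dvd h0
      rcases (Nat.Prime.eq_one_or_self_of_dvd hp _ hd) with h1 | h1
      · exact absurd h1 (CharP.char_ne_one Rₛ _)
      · exact h1 ▸ ringChar.charP Rₛ
    rw [fpow_map (algebraMap R Rₛ) p hp, colon_map R Rₛ W I J hJ]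
end

section
/- Let R be a Noetherian commutative ring of prime characteristic p, W a multiplicatively closed subset, I, J ideals, and q = p^e. If (I : J)^{[q]} = (I^{[q]} : J^{[q]}) in R, then ((I_W) : (J_W))^{[q]} = ((I_W)^{[q]} : (J_W)^{[q]}) in the localization R_W. -/
open IsLocalRing

/-- The map of the Frobenius power is the Frobenius power of the map (for `q = p^e`, `p` prime
and zero in the target). -/
lemma map_fpow {R Rₛ : Type*} [CommRing R] [CommRing Rₛ] (f : R →+* Rₛ)
    {p : ℕ} (hp : p.Prime) (hp0 : (p : Rₛ) = 0) (I : Ideal R) (e : ℕ) :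
    Ideal.map f (I.fpow (p ^ e)) = (Ideal.map f I).fpow (p ^ e) := by
  apply le_antisymm
  · rw [Ideal.fpow, Ideal.map_span, Ideal.span_le]
    rintro _ ⟨_, ⟨x, hx, rfl⟩, rfl⟩
    rw [map_pow]
    exact Ideal.subset_span ⟨f x, Ideal.mem_map_of_mem f hx, rfl⟩
  · rw [Ideal.fpow, Ideal.span_le]
    rintro _ ⟨y, hy, rfl⟩
    have hmap : Ideal.map f I = Ideal.span (f '' I) := rfl
    rw [hmap, SetLike.mem_coe] at hy
    show y ^ (p ^ e) ∈ Ideal.map f (I.fpow (p ^ e))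
    refine Submodule.span_induction
      (p := fun y _ => y ^ (p ^ e) ∈ Ideal.map f (I.fpow (p ^ e))) ?_ ?_ ?_ ?_ hy
    · rintro _ ⟨x, hx, rfl⟩
      show f x ^ p ^ e ∈ _
      rw [← map_pow]
      exact Ideal.mem_map_of_mem f (Ideal.subset_span ⟨x, hx, rfl⟩)
    · show (0 : Rₛ) ^ p ^ e ∈ _
      rw [zero_pow (pow_ne_zero e hp.ne_zero)]
      exact zero_mem _
    · intro a b _ _ ha hb
      show (a + b) ^ p ^ e ∈ _
      rw [add_pow_prime_pow_eq hp a b e, hp0, zero_mul, zero_mul, zero_mul, add_zero]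
      exact add_mem ha hb
    · intro r z _ hz
      show (r • z) ^ p ^ e ∈ _
      rw [smul_eq_mul, mul_pow]
      exact Ideal.mul_mem_left _ _ hz

/-- Localization commutes with colon of ideals when the denominator is finitely generated. -/
lemma map_colon {R Rₛ : Type*} [CommRing R] [CommRing Rₛ] [Algebra R Rₛ]
    (W : Submonoid R) [IsLocalization W Rₛ] (I J : Ideal R) (hJ : J.FG) :
    Ideal.map (algebraMap R Rₛ) (Submodule.colon I J) =
      Submodule.colon (Ideal.map (algebraMap R Rₛ) I) (Ideal.map (algebraMap R Rₛ) J) := by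
  classical
  set f := algebraMap R Rₛ
  apply le_antisymm
  · rw [Ideal.map_le_iff_le_comap]
    intro r hr
    rw [Ideal.mem_comap, Submodule.mem_colon]
    intro z hz
    obtain ⟨⟨⟨j, hj⟩, w⟩, hw⟩ := (IsLocalization.mem_map_algebraMap_iff W Rₛ).mp hz
    rw [← Ideal.unit_mul_mem_iff_mem _ (IsLocalization.map_units Rₛ w)]
    have : (f w : Rₛ) * (f r • z) = f (r * j) := by
      rw [smul_eq_mul, map_mul]
      calc f ↑w * (f r * z) = f r * (z * f ↑w) := by ring
        _ = f r * f j := by rw [hw]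
    rw [this]
    exact Ideal.mem_map_of_mem f (Submodule.mem_colon.mp hr j hj)
  · intro z hz
    obtain ⟨⟨r, w⟩, rfl⟩ := IsLocalization.mk'_surjective W z
    rw [IsLocalization.mk'_mem_map_algebraMap_iff W]
    obtain ⟨T, hT⟩ := hJ
    -- for each generator j, find s ∈ W with s * (r * j) ∈ I
    have key : ∀ j : R, ∃ s, s ∈ W ∧ (j ∈ T → s * (r * j) ∈ I) := by
      intro j
      by_cases hjT : j ∈ T
      · have hjJ : j ∈ J := hT ▸ Ideal.subset_span hjT
        have h1 : f j ∈ Ideal.map f J := Ideal.mem_map_of_mem f hjJ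
        have h2 : IsLocalization.mk' Rₛ r w • f j ∈ Ideal.map f I :=
          Submodule.mem_colon.mp hz _ h1
        have h3 : f (r * j) ∈ Ideal.map f I := by
          have := (Ideal.map f I).smul_mem (f w) h2
          rw [smul_eq_mul, smul_eq_mul, ← mul_assoc,
            IsLocalization.mk'_spec', ← map_mul] at this
          exact this
        have h4 : IsLocalization.mk' Rₛ (r * j) (1 : W) ∈ Ideal.map f I := by
          rwa [IsLocalization.mk'_one]
        obtain ⟨s, hsW, hs⟩ := (IsLocalization.mk'_mem_map_algebraMap_iff W Rₛ I (r * j) 1).mp h4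
        exact ⟨s, hsW, fun _ => hs⟩
      · exact ⟨1, one_mem W, fun h => absurd h hjT⟩
    choose g hgW hgI using key
    refine ⟨∏ j ∈ T, g j, prod_mem fun j hj => hgW j, ?_⟩
    rw [← hT]
    rw [Submodule.mem_colon]
    intro x hx
    refine Submodule.span_induction
      (p := fun x _ => ((∏ j ∈ T, g j) * r) • x ∈ I) ?_ ?_ ?_ ?_ hx
    · intro j hj
      have hj' : j ∈ T := hj
      show ((∏ j' ∈ T, g j') * r) • j ∈ I
      rw [smul_eq_mul, mul_assoc, ← Finset.mul_prod_erase T g hj']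
      rw [mul_assoc, mul_left_comm]
      exact Ideal.mul_mem_left _ _ (hgI j hj')
    · show ((∏ j ∈ T, g j) * r) • (0 : R) ∈ I
      simp
    · intro a b _ _ ha hb
      show ((∏ j ∈ T, g j) * r) • (a + b) ∈ I
      rw [smul_add]
      exact add_mem ha hb
    · intro c a _ ha
      show ((∏ j ∈ T, g j) * r) • (c • a) ∈ I
      rw [smul_comm]
      exact Submodule.smul_mem I c ha

theorem stmt3 (R Rₛ : Type*) [CommRing R] [IsNoetherianRing R] [CommRing Rₛ] [Algebra R Rₛ]
    (W : Submonoid R) [IsLocalization W Rₛ]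
    (p : ℕ) (hp : p.Prime) [CharP R p]
    (I J : Ideal R) (e : ℕ)
    (h : Ideal.fpow (Submodule.colon I J) (p ^ e) =
      Submodule.colon (Ideal.fpow I (p ^ e)) (Ideal.fpow J (p ^ e))) :
    Ideal.fpow
        (Submodule.colon (Ideal.map (algebraMap R Rₛ) I) (Ideal.map (algebraMap R Rₛ) J))
        (p ^ e) =
      Submodule.colon (Ideal.fpow (Ideal.map (algebraMap R Rₛ) I) (p ^ e))
        (Ideal.fpow (Ideal.map (algebraMap R Rₛ) J) (p ^ e)) := by
  have hp0 : (p : Rₛ) = 0 := by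
    rw [← map_natCast (algebraMap R Rₛ) p, CharP.cast_eq_zero R p, map_zero]
  rw [← map_colon W I J (IsNoetherian.noetherian J),
    ← map_fpow (algebraMap R Rₛ) hp hp0,
    h,
    map_colon W _ _ (IsNoetherian.noetherian _),
    map_fpow (algebraMap R Rₛ) hp hp0, map_fpow (algebraMap R Rₛ) hp hp0]
end

section
/- Let (R, m) be a Noetherian local ring of prime characteristic p. Suppose that for every m-primary ideal a, every element x ∈ R, and every q = p^e (e ≥ 1), one has (a^{[q]} : x^q) = ((a : x))^{[q]}. Let I ⊆ J be ideals with I m-primary. Then for all q = p^e, the length λ(R/I^{[q]}) = λ(J/I) · λ(R/m^{[q]}) + λ(R/J^{[q]}). -/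
open IsLocalRing

/-- The length of a module, expressed as the Krull dimension of its lattice of submodules. -/
noncomputable def moduleLength (R M : Type*) [CommRing R] [AddCommGroup M] [Module R M] :
    WithBot ℕ∞ :=
  Order.krullDim (Submodule R M)

/-- An ideal of a local ring is primary to the maximal ideal. -/
def IsMPrimary {R : Type*} [CommRing R] [IsLocalRing R] (a : Ideal R) : Prop :=
  ∃ n : ℕ, (IsLocalRing.maximalIdeal R) ^ n ≤ a

open Order

section OrderAux
variable {α β γ : Type*} [Preorder α] [Preorder β] [Preorder γ]

lemma auxChain (f : α → β) (g : α → γ) (hf : Monotone f) (hg : Monotone g)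
    (h : ∀ ⦃a b : α⦄, a < b → f a < f b ∨ g a < g b) :
    ∀ (n : ℕ) (p : LTSeries α), p.length = n → (p.length : ℕ∞) ≤ Order.height (f p.last) + Order.height (g p.last) := by
  intro n
  induction n with
  | zero => intro p hn; simp [hn]
  | succ n ih =>
    intro p hn
    have hlen : p.eraseLast.length = n := by simp [hn]
    have hlt : p.eraseLast.last < p.last := p.eraseLast_last_rel_last (by omega)
    have H := ih p.eraseLast hlen
    rw [hlen] at H
    rw [hn]
    rcases h hlt with hs | hs
    · by_cases htop : Order.height (f p.eraseLast.last) = ⊤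
      · have : Order.height (f p.last) = ⊤ := by
          have := Order.height_mono hs.le
          rw [htop] at this; exact top_le_iff.mp this
        rw [this]; simp [top_add]
      · have h1 : Order.height (f p.eraseLast.last) + 1 ≤ Order.height (f p.last) :=
          Order.add_one_le_of_lt (Order.height_strictMono hs (lt_top_iff_ne_top.mpr htop))
        calc ((n+1 : ℕ) : ℕ∞) = (n : ℕ∞) + 1 := by push_cast; ring
        _ ≤ (Order.height (f p.eraseLast.last) + Order.height (g p.eraseLast.last)) + 1 := by
            exact add_le_add_left H 1
        _ = (Order.height (f p.eraseLast.last) + 1) + Order.height (g p.eraseLast.last) := by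
            ring
        _ ≤ Order.height (f p.last) + Order.height (g p.last) :=
            add_le_add h1 (Order.height_mono (hg hlt.le))
    · by_cases htop : Order.height (g p.eraseLast.last) = ⊤
      · have : Order.height (g p.last) = ⊤ := by
          have := Order.height_mono hs.le
          rw [htop] at this; exact top_le_iff.mp this
        rw [this]; simp [top_add]
      · have h1 : Order.height (g p.eraseLast.last) + 1 ≤ Order.height (g p.last) :=
          Order.add_one_le_of_lt (Order.height_strictMono hs (lt_top_iff_ne_top.mpr htop))
        calc ((n+1 : ℕ) : ℕ∞) = (n : ℕ∞) + 1 := by push_cast; ring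
        _ ≤ (Order.height (f p.eraseLast.last) + Order.height (g p.eraseLast.last)) + 1 := by
            exact add_le_add_left H 1
        _ = Order.height (f p.eraseLast.last) + (Order.height (g p.eraseLast.last) + 1) := by
            ring
        _ ≤ Order.height (f p.last) + Order.height (g p.last) :=
            add_le_add (Order.height_mono (hf hlt.le)) h1

lemma auxKrullLe (f : α → β) (g : α → γ) (hf : Monotone f) (hg : Monotone g)
    (h : ∀ ⦃a b : α⦄, a < b → f a < f b ∨ g a < g b) :
    krullDim α ≤ krullDim β + krullDim γ := by
  cases isEmpty_or_nonempty α with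
  | inl hα => rw [krullDim_eq_bot]; exact bot_le
  | inr hα =>
    rw [krullDim_eq_iSup_length]
    rw [WithBot.coe_iSup (OrderTop.bddAbove _)]
    apply iSup_le
    intro p
    calc ((p.length : ℕ∞) : WithBot ℕ∞)
        ≤ ((Order.height (f p.last) + Order.height (g p.last) : ℕ∞) : WithBot ℕ∞) := by
          exact_mod_cast auxChain f g hf hg h p.length p rfl
      _ = (Order.height (f p.last) : WithBot ℕ∞) + (Order.height (g p.last) : WithBot ℕ∞) := by
          push_cast; rfl
      _ ≤ krullDim β + krullDim γ :=
          add_le_add (Order.height_le_krullDim _) (Order.height_le_krullDim _)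

end OrderAux


section ModuleLen
variable {R M M' : Type*} [CommRing R] [AddCommGroup M] [Module R M]
  [AddCommGroup M'] [Module R M']

lemma moduleLength_congr (e : M ≃ₗ[R] M') : moduleLength R M = moduleLength R M' :=
  Order.krullDim_eq_of_orderIso (Submodule.orderIsoMapComap e)

lemma moduleLength_nonneg : 0 ≤ moduleLength R M :=
  Order.krullDim_nonneg

lemma moduleLength_ne_bot : moduleLength R M ≠ ⊥ := by
  intro h
  have := moduleLength_nonneg (R := R) (M := M)
  rw [h] at this
  simp at this

lemma moduleLength_eq_zero_of_subsingleton [hM : Subsingleton M] : moduleLength R M = 0 := by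
  haveI : Subsingleton (Submodule R M) := by
    constructor
    intro a b
    ext x
    have : x = 0 := Subsingleton.elim x 0
    simp [this]
  exact le_antisymm (Order.krullDim_nonpos_of_subsingleton) moduleLength_nonneg

lemma subsingleton_of_moduleLength_eq_zero (h : moduleLength R M = 0) : Subsingleton M := by
  by_contra hs
  rw [not_subsingleton_iff_nontrivial] at hs
  have hbt : (⊥ : Submodule R M) < ⊤ := by
    refine lt_of_le_of_ne le_top ?_
    intro heq
    obtain ⟨x, hx⟩ := exists_ne (0 : M)
    have : x ∈ (⊥ : Submodule R M) := heq ▸ Submodule.mem_top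
    exact hx (Submodule.mem_bot R |>.mp this)
  have := LTSeries.length_le_krullDim ((RelSeries.singleton _ (⊥ : Submodule R M)).snoc ⊤ hbt)
  rw [show ((RelSeries.singleton _ (⊥ : Submodule R M)).snoc ⊤ hbt).length = 1 from rfl] at this
  rw [show Order.krullDim (Submodule R M) = moduleLength R M from rfl, h] at this
  simp at this
  exact absurd this (by norm_num)

lemma moduleLength_simple (h : IsSimpleModule R M) : moduleLength R M = 1 := by
  apply le_antisymm
  · unfold moduleLength
    rw [krullDim_eq_iSup_length, WithBot.coe_iSup (OrderTop.bddAbove _)]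
    apply iSup_le
    intro p
    suffices hl : p.length ≤ 1 by exact_mod_cast hl
    by_contra hlen
    push_neg at hlen
    have h2 : 2 ≤ p.length := hlen
    have h01 : p ⟨0, by omega⟩ < p ⟨1, by omega⟩ := p.strictMono (by rw [Fin.lt_def]; simp)
    have h12 : p ⟨1, by omega⟩ < p ⟨2, by omega⟩ := p.strictMono (by rw [Fin.lt_def]; simp)
    rcases h.1.2 (p ⟨1, by omega⟩) with h1 | h1
    · rw [h1] at h01
      exact not_lt_bot h01
    · rw [h1] at h12
      exact not_top_lt h12
  · haveI := h
    have hbt : (⊥ : Submodule R M) < ⊤ := bot_lt_top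
    have := LTSeries.length_le_krullDim ((RelSeries.singleton _ (⊥ : Submodule R M)).snoc ⊤ hbt)
    exact this

lemma moduleLength_add (N : Submodule R M) :
    moduleLength R M = moduleLength R N + moduleLength R (M ⧸ N) := by
  apply le_antisymm
  · apply auxKrullLe (fun A => Submodule.comap N.subtype A) (fun A => Submodule.map N.mkQ A)
      (fun _ _ h => Submodule.comap_mono h) (fun _ _ h => Submodule.map_mono h)
    intro A B hAB
    by_cases hg : Submodule.map N.mkQ A < Submodule.map N.mkQ B
    · right; exact hg
    · left
      have hgle : Submodule.map N.mkQ B ≤ Submodule.map N.mkQ A :=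
        le_of_eq (((Submodule.map_mono hAB.le).lt_or_eq.resolve_left hg).symm)
      have hsup : B ⊔ N ≤ A ⊔ N := by
        have h2 : Submodule.comap N.mkQ (Submodule.map N.mkQ B)
            ≤ Submodule.comap N.mkQ (Submodule.map N.mkQ A) := Submodule.comap_mono hgle
        simp only [Submodule.comap_map_mkQ] at h2
        exact sup_le ((le_sup_right.trans h2).trans (sup_comm N A).le) le_sup_right
      have hinf := inf_lt_inf_of_lt_of_sup_le_sup hAB hsup
      refine lt_of_le_of_ne (Submodule.comap_mono hAB.le) ?_
      intro heq
      have hmap := congrArg (Submodule.map N.subtype) heq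
      rw [Submodule.map_comap_subtype, Submodule.map_comap_subtype] at hmap
      rw [inf_comm A N, inf_comm B N] at hinf
      exact hinf.ne hmap
  · have hN : krullDim (Submodule R N) ≤ ((Order.height N : ℕ∞) : WithBot ℕ∞) := by
      rw [krullDim_eq_iSup_length, WithBot.coe_iSup (OrderTop.bddAbove _)]
      apply iSup_le
      intro p
      have hsm : StrictMono (fun X : Submodule R N => Submodule.map N.subtype X) :=
        fun a b hab => lt_of_le_of_ne (Submodule.map_mono hab.le)
          (fun he => hab.ne (Submodule.map_injective_of_injective N.injective_subtype he))
      have hlast : (p.map _ hsm).last ≤ N := by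
        simpa using Submodule.map_subtype_le N p.last
      have := Order.length_le_height hlast
      exact_mod_cast this
    have hQ : krullDim (Submodule R (M ⧸ N)) ≤ ((Order.coheight N : ℕ∞) : WithBot ℕ∞) := by
      rw [krullDim_eq_iSup_length, WithBot.coe_iSup (OrderTop.bddAbove _)]
      apply iSup_le
      intro p
      have hsm : StrictMono (fun X : Submodule R (M ⧸ N) => Submodule.comap N.mkQ X) :=
        fun a b hab => lt_of_le_of_ne (Submodule.comap_mono hab.le)
          (fun he => hab.ne (Submodule.comap_injective_of_surjective N.mkQ_surjective he))
      have hhead : N ≤ (p.map _ hsm).head := by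
        have hbot : Submodule.map N.mkQ N = ⊥ :=
          le_bot_iff.mp (Submodule.map_le_iff_le_comap.mpr
            (by rw [Submodule.comap_bot, Submodule.ker_mkQ]))
        have : Submodule.map N.mkQ N ≤ p.head := hbot ▸ bot_le
        simpa using Submodule.map_le_iff_le_comap.mp this
      have := Order.length_le_coheight hhead
      exact_mod_cast this
    have key := krullDim_eq_iSup_height_add_coheight_of_nonempty (α := Submodule R M)
    calc moduleLength R N + moduleLength R (M ⧸ N)
        ≤ ((Order.height N : ℕ∞) : WithBot ℕ∞) + ((Order.coheight N : ℕ∞) : WithBot ℕ∞) :=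
          add_le_add hN hQ
      _ = ((Order.height N + Order.coheight N : ℕ∞) : WithBot ℕ∞) := by push_cast; rfl
      _ ≤ krullDim (Submodule R M) := by
          rw [key]
          exact WithBot.coe_le_coe.mpr (le_iSup (fun a => Order.height a + Order.coheight a) N)


lemma moduleLength_coe_of_isFiniteLength (h : IsFiniteLength R M) :
    ∃ n : ℕ, moduleLength R M = ((n : ℕ∞) : WithBot ℕ∞) := by
  induction h with
  | of_subsingleton => exact ⟨0, by simpa using moduleLength_eq_zero_of_subsingleton⟩
  | @of_simple_quotient M _ _ N hsimple hN ih =>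
    obtain ⟨n, hn⟩ := ih
    refine ⟨n + 1, ?_⟩
    rw [moduleLength_add N, hn, moduleLength_simple hsimple]
    push_cast
    ring

end ModuleLen

section RingLen
variable {R : Type*} [CommRing R]

/-- relative length of `B/A`. -/
noncomputable def idealLen (A B : Ideal R) : WithBot ℕ∞ :=
  moduleLength R (Submodule.map A.mkQ B)

lemma map_mkQ_self_eq_bot (A : Ideal R) : Submodule.map A.mkQ A = ⊥ :=
  le_bot_iff.mp (Submodule.map_le_iff_le_comap.mpr
    (by rw [Submodule.comap_bot, Submodule.ker_mkQ]))

lemma quot_add (A B : Ideal R) (h : A ≤ B) :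
    moduleLength R (R ⧸ A) = idealLen A B + moduleLength R (R ⧸ B) := by
  rw [moduleLength_add (Submodule.map A.mkQ B)]
  congr 1
  exact moduleLength_congr (Submodule.quotientQuotientEquivQuotient A B h)

lemma idealLen_add (A B C : Ideal R) (hab : A ≤ B) (hbc : B ≤ C) :
    idealLen A C = idealLen A B + idealLen B C := by
  set Mc := Submodule.map A.mkQ C with hMc
  have hBC : Submodule.map A.mkQ B ≤ Mc := Submodule.map_mono hbc
  set N := Submodule.comap Mc.subtype (Submodule.map A.mkQ B) with hN
  have e1 : (↥N) ≃ₗ[R] ↥(Submodule.map A.mkQ B) := Submodule.comapSubtypeEquivOfLe hBC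
  have hker : A ≤ LinearMap.ker B.mkQ := by rw [Submodule.ker_mkQ]; exact hab
  set π : (R ⧸ A) →ₗ[R] R ⧸ B := Submodule.liftQ A B.mkQ hker with hπ
  have hπmk : π.comp A.mkQ = B.mkQ := Submodule.liftQ_mkQ _ _ _
  set φ : ↥Mc →ₗ[R] R ⧸ B := π.comp Mc.subtype with hφ
  have hkerφ : LinearMap.ker φ = N := by
    rw [hφ, LinearMap.ker_comp, hN]
    congr 1
    rw [hπ, Submodule.ker_liftQ, Submodule.ker_mkQ]
  have hrangeφ : LinearMap.range φ = Submodule.map B.mkQ C := by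
    rw [hφ, LinearMap.range_comp, Submodule.range_subtype, hMc,
      ← Submodule.map_comp, hπmk]
  have e2 : (↥Mc ⧸ N) ≃ₗ[R] ↥(Submodule.map B.mkQ C) := by
    rw [← hkerφ]
    exact (φ.quotKerEquivRange).trans (LinearEquiv.ofEq _ _ hrangeφ)
  have h1 := moduleLength_add (M := ↥Mc) N
  rw [show idealLen A C = moduleLength R ↥Mc from rfl, h1,
    moduleLength_congr e1, moduleLength_congr e2]
  rfl

lemma idealLen_sup_span (A : Ideal R) (x : R) :
    idealLen A (A ⊔ Ideal.span {x})
      = moduleLength R (R ⧸ Submodule.colon A (Ideal.span {x})) := by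
  have hmap : Submodule.map A.mkQ (A ⊔ Ideal.span {x}) = Submodule.span R {A.mkQ x} := by
    rw [Submodule.map_sup, map_mkQ_self_eq_bot, bot_sup_eq, ← Ideal.submodule_span_eq,
      Submodule.map_span, Set.image_singleton]
  set φ := LinearMap.toSpanSingleton R (R ⧸ A) (A.mkQ x) with hφ
  have hker : LinearMap.ker φ = Submodule.colon A (Ideal.span {x}) := by
    ext r
    rw [LinearMap.mem_ker, ← Ideal.submodule_span_eq, Submodule.mem_colon_span_singleton]
    show r • A.mkQ x = 0 ↔ r • x ∈ A
    rw [← map_smul, Submodule.mkQ_apply, Submodule.Quotient.mk_eq_zero]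
  have hrange : LinearMap.range φ = Submodule.span R {A.mkQ x} :=
    (LinearMap.span_singleton_eq_range R _ _).symm
  rw [show idealLen A (A ⊔ Ideal.span {x})
      = moduleLength R ↥(Submodule.map A.mkQ (A ⊔ Ideal.span {x})) from rfl, hmap,
    ← hrange, ← hker]
  exact (moduleLength_congr φ.quotKerEquivRange).symm

lemma isArtinian_of_isSimpleModule {M : Type*} [AddCommGroup M] [Module R M]
    (h : IsSimpleModule R M) : IsArtinian R M := by
  haveI := h
  haveI := Classical.decEq (Submodule R M)
  haveI : Finite (Submodule R M) := @Finite.of_fintype _ (Fintype.ofEquiv Bool IsSimpleOrder.equivBool.symm)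
  exact Finite.to_wellFoundedLT

variable [IsLocalRing R]

lemma colon_eq_maximalIdeal {A : Ideal R} {x : R} (hx : x ∉ A)
    (h : ∀ r ∈ maximalIdeal R, r * x ∈ A) :
    Submodule.colon A (Ideal.span {x}) = maximalIdeal R := by
  apply le_antisymm
  · apply IsLocalRing.le_maximalIdeal
    intro htop
    have h1 : (1 : R) ∈ Submodule.colon A (Ideal.span {x}) := htop ▸ Submodule.mem_top
    rw [← Ideal.submodule_span_eq, Submodule.mem_colon_span_singleton, one_smul] at h1
    exact hx h1
  · intro r hr
    rw [← Ideal.submodule_span_eq, Submodule.mem_colon_span_singleton, smul_eq_mul]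
    exact h r hr

lemma artinian_quot_of_max_le {K : Ideal R} (h : maximalIdeal R ≤ K) :
    IsArtinian R (R ⧸ K) := by
  by_cases hK : K = ⊤
  · haveI : Subsingleton (R ⧸ K) := Submodule.Quotient.subsingleton_iff.mpr hK
    haveI : Finite (R ⧸ K) := Finite.of_subsingleton
    exact isArtinian_of_finite
  · have hKm : K = maximalIdeal R := le_antisymm (le_maximalIdeal hK) h
    subst hKm
    exact isArtinian_of_isSimpleModule
      (isSimpleModule_iff_isCoatom.mpr (Ideal.isMaximal_def.mp (maximalIdeal.isMaximal R)))

lemma artinian_span_of_max_smul {M : Type*} [AddCommGroup M] [Module R M] (a : M)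
    (h : ∀ r ∈ maximalIdeal R, r • a = 0) : IsArtinian R ↥(Submodule.span R {a}) := by
  have hker : maximalIdeal R ≤ LinearMap.ker (LinearMap.toSpanSingleton R M a) :=
    fun r hr => LinearMap.mem_ker.mpr (h r hr)
  haveI := artinian_quot_of_max_le hker
  exact isArtinian_of_linearEquiv
    ((LinearMap.toSpanSingleton R M a).quotKerEquivRange.trans
      (LinearEquiv.ofEq _ _ (LinearMap.span_singleton_eq_range R M a).symm))

lemma artinian_of_fg_max_smul {M : Type*} [AddCommGroup M] [Module R M]
    (K : Submodule R M) (hfg : K.FG)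
    (h : ∀ r ∈ maximalIdeal R, ∀ y ∈ K, r • y = 0) : IsArtinian R ↥K := by
  classical
  obtain ⟨s, hs⟩ := hfg
  induction s using Finset.induction generalizing K with
  | empty =>
    simp only [Finset.coe_empty, Submodule.span_empty] at hs
    haveI : Subsingleton ↥K := by rw [Submodule.subsingleton_iff_eq_bot]; exact hs.symm
    haveI : Finite ↥K := Finite.of_subsingleton
    exact isArtinian_of_finite
  | @insert a s ha ih =>
    rw [Finset.coe_insert, Submodule.span_insert] at hs
    have hmem_a : a ∈ K := by
      rw [← hs]; exact Submodule.mem_sup_left (Submodule.mem_span_singleton_self a)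
    have h1 : IsArtinian R ↥(Submodule.span R {a}) :=
      artinian_span_of_max_smul a (fun r hr => h r hr a hmem_a)
    have h2 : IsArtinian R ↥(Submodule.span R (s : Set M)) :=
      ih _ (fun r hr y hy => h r hr y (by rw [← hs]; exact Submodule.mem_sup_right hy)) rfl
    haveI := h1; haveI := h2
    rw [← hs]
    exact isArtinian_sup _ _

variable [IsNoetherianRing R]

lemma artinian_quot_pow (n : ℕ) :
    IsArtinian R (R ⧸ (maximalIdeal R ^ n : Ideal R)) := by
  induction n with
  | zero =>
    haveI : Subsingleton (R ⧸ (maximalIdeal R ^ 0 : Ideal R)) :=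
      Submodule.Quotient.subsingleton_iff.mpr (by rw [pow_zero, Ideal.one_eq_top])
    haveI : Finite (R ⧸ (maximalIdeal R ^ 0 : Ideal R)) := Finite.of_subsingleton
    exact isArtinian_of_finite
  | succ n ih =>
    set A : Ideal R := maximalIdeal R ^ (n + 1) with hA
    set K := Submodule.map A.mkQ (maximalIdeal R ^ n : Ideal R) with hK
    have hfg : K.FG := (IsNoetherian.noetherian _).map _
    have hsm : ∀ r ∈ maximalIdeal R, ∀ y ∈ K, r • y = 0 := by
      intro r hr y hy
      obtain ⟨z, hz, rfl⟩ := hy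
      rw [← map_smul, Submodule.mkQ_apply, Submodule.Quotient.mk_eq_zero]
      have : z * r ∈ A := by
        rw [hA, pow_succ]
        exact Ideal.mul_mem_mul hz hr
      rwa [smul_eq_mul, mul_comm]
    haveI hKart : IsArtinian R ↥K := artinian_of_fg_max_smul K hfg hsm
    haveI := ih
    have hker : A ≤ LinearMap.ker (maximalIdeal R ^ n : Ideal R).mkQ := by
      rw [Submodule.ker_mkQ, hA]
      exact Ideal.pow_le_pow_right (by omega)
    apply isArtinian_of_range_eq_ker K.subtype
      (Submodule.liftQ A (maximalIdeal R ^ n : Ideal R).mkQ hker)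
    rw [Submodule.range_subtype, Submodule.ker_liftQ, Submodule.ker_mkQ, hK]

lemma artinian_of_isMPrimary {I : Ideal R} (hI : IsMPrimary I) : IsArtinian R (R ⧸ I) := by
  obtain ⟨n, hn⟩ := hI
  haveI := artinian_quot_pow (R := R) n
  have hker : (maximalIdeal R ^ n : Ideal R) ≤ LinearMap.ker I.mkQ := by
    rw [Submodule.ker_mkQ]; exact hn
  exact isArtinian_of_surjective _ (Submodule.liftQ _ I.mkQ hker)
    (by
      intro y
      obtain ⟨x, rfl⟩ := Submodule.mkQ_surjective I y
      exact ⟨(maximalIdeal R ^ n : Ideal R).mkQ x, rfl⟩)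

end RingLen

section Fpow
variable {R : Type*} [CommRing R]

lemma fpow_le_fpow {I J : Ideal R} (h : I ≤ J) (q : ℕ) : I.fpow q ≤ J.fpow q :=
  Ideal.span_mono (Set.image_mono h)

lemma fpow_one (I : Ideal R) : I.fpow 1 = I := by
  unfold Ideal.fpow
  simp only [pow_one]
  rw [Set.image_id']
  exact Ideal.span_eq I

lemma fpow_span_singleton (x : R) (q : ℕ) :
    (Ideal.span {x} : Ideal R).fpow q = Ideal.span {x ^ q} := by
  apply le_antisymm
  · rw [Ideal.fpow, Ideal.span_le]
    rintro _ ⟨z, hz, rfl⟩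
    rw [SetLike.mem_coe]
    obtain ⟨a, rfl⟩ := Ideal.mem_span_singleton'.mp hz
    exact Ideal.mem_span_singleton'.mpr ⟨a ^ q, by simp [mul_pow]⟩
  · rw [Ideal.span_le, Set.singleton_subset_iff]
    exact Ideal.subset_span ⟨x, Ideal.mem_span_singleton_self x, rfl⟩

lemma fpow_sup {p : ℕ} [hp : Fact p.Prime] [CharP R p] (I J : Ideal R) (e : ℕ) :
    (I ⊔ J).fpow (p ^ e) = I.fpow (p ^ e) ⊔ J.fpow (p ^ e) := by
  apply le_antisymm
  · rw [Ideal.fpow, Ideal.span_le]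
    rintro _ ⟨z, hz, rfl⟩
    rw [SetLike.mem_coe]
    obtain ⟨a, ha, b, hb, rfl⟩ := Submodule.mem_sup.mp hz
    show (a + b) ^ p ^ e ∈ _
    rw [add_pow_char_pow]
    exact Submodule.add_mem _
      (Submodule.mem_sup_left (Ideal.subset_span ⟨a, ha, rfl⟩))
      (Submodule.mem_sup_right (Ideal.subset_span ⟨b, hb, rfl⟩))
  · exact sup_le (fpow_le_fpow le_sup_left _) (fpow_le_fpow le_sup_right _)

end Fpow

section Arith

lemma wb_cancel {a : WithBot ℕ∞} {n : ℕ} (h : a + 1 = (((n + 1 : ℕ) : ℕ∞) : WithBot ℕ∞)) :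
    a = ((n : ℕ∞) : WithBot ℕ∞) := by
  induction a with
  | bot =>
    rw [WithBot.bot_add] at h
    exact absurd h WithBot.bot_ne_coe
  | coe b =>
    rw [show ((b : WithBot ℕ∞) + 1) = ((b + 1 : ℕ∞) : WithBot ℕ∞) from by push_cast; rfl,
      WithBot.coe_inj] at h
    rw [WithBot.coe_inj]
    induction b with
    | top =>
      rw [top_add] at h
      exact absurd h.symm (ENat.coe_ne_top _)
    | coe k =>
      norm_cast at h ⊢
      omega

lemma wb_mul_succ (n : ℕ) (b c : WithBot ℕ∞) (hb : b ≠ ⊥) (hc : c ≠ ⊥) :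
    ((n : ℕ∞) : WithBot ℕ∞) * b + (b + c) = (((n + 1 : ℕ) : ℕ∞) : WithBot ℕ∞) * b + c := by
  induction b with
  | bot => exact absurd rfl hb
  | coe b' =>
    induction c with
    | bot => exact absurd rfl hc
    | coe c' =>
      rw [← WithBot.coe_mul, ← WithBot.coe_mul, ← WithBot.coe_add, ← WithBot.coe_add,
        ← WithBot.coe_add, WithBot.coe_inj]
      push_cast
      ring

end Arith

section Arith2

lemma wb_zero_mul (b : WithBot ℕ∞) (hb : b ≠ ⊥) :
    (((0 : ℕ) : ℕ∞) : WithBot ℕ∞) * b = 0 := by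
  induction b with
  | bot => exact absurd rfl hb
  | coe b' =>
    rw [← WithBot.coe_mul]
    norm_num

end Arith2

section Main
variable {R : Type*} [CommRing R] [IsLocalRing R] [IsNoetherianRing R]
  {p : ℕ} [CharP R p]

lemma main_induction (hp : p.Prime)
    (hC : ∀ a : Ideal R, IsMPrimary a → ∀ x : R, ∀ e : ℕ, 1 ≤ e →
      Submodule.colon (Ideal.fpow a (p ^ e)) (Ideal.span {x ^ p ^ e}) =
        Ideal.fpow (Submodule.colon a (Ideal.span {x})) (p ^ e))
    (n : ℕ) : ∀ I J : Ideal R, I ≤ J → IsMPrimary I →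
    idealLen I J = ((n : ℕ∞) : WithBot ℕ∞) → ∀ e : ℕ,
    moduleLength R (R ⧸ Ideal.fpow I (p ^ e)) =
      ((n : ℕ∞) : WithBot ℕ∞) * moduleLength R (R ⧸ Ideal.fpow (maximalIdeal R) (p ^ e)) +
      moduleLength R (R ⧸ Ideal.fpow J (p ^ e)) := by
  haveI : Fact p.Prime := ⟨hp⟩
  induction n with
  | zero =>
    intro I J hIJ hI hlen e
    have hsub : Subsingleton ↥(Submodule.map I.mkQ J) :=
      subsingleton_of_moduleLength_eq_zero (by
        rw [show moduleLength R ↥(Submodule.map I.mkQ J) = idealLen I J from rfl, hlen]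
        norm_num)
    have h0 : Submodule.map I.mkQ J = ⊥ := Submodule.subsingleton_iff_eq_bot.mp hsub
    have hJI : J = I := by
      apply le_antisymm _ hIJ
      intro y hy
      have hm : I.mkQ y ∈ Submodule.map I.mkQ J := Submodule.mem_map_of_mem hy
      rw [h0, Submodule.mem_bot] at hm
      rwa [Submodule.mkQ_apply, Submodule.Quotient.mk_eq_zero] at hm
    rw [hJI, wb_zero_mul _ moduleLength_ne_bot, zero_add]
  | succ n ih =>
    intro I J hIJ hI hlen e
    have hJQne : Submodule.map I.mkQ J ≠ ⊥ := by
      intro hb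
      rw [show idealLen I J = moduleLength R ↥(Submodule.map I.mkQ J) from rfl] at hlen
      haveI : Subsingleton ↥(Submodule.map I.mkQ J) := by
        rw [Submodule.subsingleton_iff_eq_bot]; exact hb
      rw [moduleLength_eq_zero_of_subsingleton] at hlen
      have h2 : ((((n : ℕ) + 1 : ℕ) : ℕ∞) : WithBot ℕ∞) ≠ 0 := by
        exact_mod_cast Nat.succ_ne_zero n
      exact h2 (by exact_mod_cast hlen.symm)
    have hwf : WellFounded ((· > ·) : Submodule R (R ⧸ I) → Submodule R (R ⧸ I) → Prop) :=
      (isNoetherian_iff (R := R) (M := R ⧸ I)).mp inferInstance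
    obtain ⟨C, hCmem, hCmax⟩ := hwf.has_min {A | A < Submodule.map I.mkQ J}
      ⟨⊥, bot_lt_iff_ne_bot.mpr hJQne⟩
    rw [Set.mem_setOf_eq] at hCmem
    set J' : Ideal R := Submodule.comap I.mkQ C with hJ'
    have hIJ' : I ≤ J' := by
      intro y hy
      rw [hJ', Submodule.mem_comap]
      have hzero : I.mkQ y = 0 := by
        rw [Submodule.mkQ_apply, Submodule.Quotient.mk_eq_zero]; exact hy
      rw [hzero]
      exact Submodule.zero_mem C
    have hmapJ' : Submodule.map I.mkQ J' = C := by
      rw [hJ', Submodule.map_comap_eq, Submodule.range_mkQ, top_inf_eq]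
    have hJ'J : J' ≤ J := by
      intro y hy
      rw [hJ', Submodule.mem_comap] at hy
      have h2 : I.mkQ y ∈ Submodule.map I.mkQ J := hCmem.le hy
      obtain ⟨z, hz, hzy⟩ := h2
      have hzy' : z - y ∈ I := by
        rw [Submodule.mkQ_apply, Submodule.mkQ_apply, Submodule.Quotient.eq] at hzy
        exact hzy
      have hmem : z - (z - y) ∈ J := sub_mem hz (hIJ hzy')
      rwa [sub_sub_cancel] at hmem
    have hJ'neJ : J' ≠ J := by
      intro he
      exact hCmem.ne (by rw [← hmapJ', he])
    obtain ⟨x, hxJ, hxJ'⟩ := SetLike.exists_of_lt (lt_of_le_of_ne hJ'J hJ'neJ)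
    have hcover : ∀ K : Ideal R, J' < K → K ≤ J → K = J := by
      intro K hK1 hK2
      have hCK : C < Submodule.map I.mkQ K := by
        refine lt_of_le_of_ne (by rw [← hmapJ']; exact Submodule.map_mono hK1.le) ?_
        intro he
        have hKJ' : K ≤ J' := by
          intro y hy
          rw [hJ', Submodule.mem_comap, he]
          exact Submodule.mem_map_of_mem hy
        exact hK1.not_ge hKJ'
      have hKJQ : Submodule.map I.mkQ K ≤ Submodule.map I.mkQ J := Submodule.map_mono hK2
      have hnotlt : ¬ (Submodule.map I.mkQ K < Submodule.map I.mkQ J) :=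
        fun hlt2 => (hCmax _ hlt2) hCK
      have heq : Submodule.map I.mkQ K = Submodule.map I.mkQ J :=
        hKJQ.lt_or_eq.resolve_left hnotlt
      apply le_antisymm hK2
      intro y hy
      have hm : I.mkQ y ∈ Submodule.map I.mkQ K := by
        rw [heq]; exact Submodule.mem_map_of_mem hy
      obtain ⟨z, hz, hzy⟩ := hm
      have hzy' : z - y ∈ I := by
        rw [Submodule.mkQ_apply, Submodule.mkQ_apply, Submodule.Quotient.eq] at hzy
        exact hzy
      have hmem : z - (z - y) ∈ K := sub_mem hz ((hIJ'.trans hK1.le) hzy')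
      rwa [sub_sub_cancel] at hmem
    have hmJQ : maximalIdeal R • Submodule.map I.mkQ J ≤ C := by
      by_contra hns
      have hlt : C < C ⊔ maximalIdeal R • Submodule.map I.mkQ J := by
        refine lt_of_le_of_ne le_sup_left ?_
        intro he
        exact hns (le_sup_right.trans he.symm.le)
      have hle : C ⊔ maximalIdeal R • Submodule.map I.mkQ J ≤ Submodule.map I.mkQ J :=
        sup_le hCmem.le Submodule.smul_le_right
      have heq : C ⊔ maximalIdeal R • Submodule.map I.mkQ J = Submodule.map I.mkQ J :=
        hle.lt_or_eq.resolve_left (fun hlt2 => (hCmax _ hlt2) hlt)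
      have hfgJQ : (Submodule.map I.mkQ J).FG := (IsNoetherian.noetherian J).map _
      have hjac : maximalIdeal R ≤ Ideal.jacobson ⊥ := by
        rw [IsLocalRing.jacobson_eq_maximalIdeal ⊥ bot_ne_top]
      have hcon := Submodule.le_of_le_smul_of_le_jacobson_bot hfgJQ hjac heq.ge
      exact hCmem.not_ge hcon
    have hmx : ∀ r ∈ maximalIdeal R, r * x ∈ J' := by
      intro r hr
      have h1 : I.mkQ (r * x) ∈ maximalIdeal R • Submodule.map I.mkQ J := by
        rw [← smul_eq_mul, map_smul]
        exact Submodule.smul_mem_smul hr (Submodule.mem_map_of_mem hxJ)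
      rw [hJ', Submodule.mem_comap]
      exact hmJQ h1
    have hcolon : Submodule.colon J' (Ideal.span {x}) = maximalIdeal R :=
      colon_eq_maximalIdeal hxJ' hmx
    have hJsup : J = J' ⊔ Ideal.span {x} :=
      (hcover (J' ⊔ Ideal.span {x})
        (lt_of_le_of_ne le_sup_left
          (fun he => hxJ' (he ▸ Submodule.mem_sup_right (Ideal.subset_span rfl))))
        (sup_le hJ'J (Ideal.span_le.mpr (Set.singleton_subset_iff.mpr hxJ)))).symm
    have hJ'prim : IsMPrimary J' := by
      obtain ⟨n0, hn0⟩ := hI; exact ⟨n0, hn0.trans hIJ'⟩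
    have hLenJ'J : idealLen J' J = ((1 : ℕ∞) : WithBot ℕ∞) := by
      rw [hJsup, idealLen_sup_span, hcolon]
      exact moduleLength_simple
        (isSimpleModule_iff_isCoatom.mpr (Ideal.isMaximal_def.mp (maximalIdeal.isMaximal R)))
    have hLenIJ' : idealLen I J' = ((n : ℕ∞) : WithBot ℕ∞) := by
      have h3 := idealLen_add I J' J hIJ' hJ'J
      rw [hlen, hLenJ'J] at h3
      apply wb_cancel
      exact_mod_cast h3.symm
    have hcolon_q : Submodule.colon (Ideal.fpow J' (p ^ e)) (Ideal.span {x ^ p ^ e})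
        = Ideal.fpow (maximalIdeal R) (p ^ e) := by
      rcases Nat.eq_zero_or_pos e with he | he
      · subst he
        rw [pow_zero, fpow_one, fpow_one, pow_one]
        exact hcolon
      · rw [hC J' hJ'prim x e he, hcolon]
    have hstep : moduleLength R (R ⧸ Ideal.fpow J' (p ^ e))
        = moduleLength R (R ⧸ Ideal.fpow (maximalIdeal R) (p ^ e))
          + moduleLength R (R ⧸ Ideal.fpow J (p ^ e)) := by
      have hkey : Ideal.fpow J (p ^ e) = Ideal.fpow J' (p ^ e) ⊔ Ideal.span {x ^ p ^ e} := by
        rw [hJsup, fpow_sup, fpow_span_singleton]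
      rw [quot_add (Ideal.fpow J' (p ^ e)) (Ideal.fpow J (p ^ e))
        (by rw [hkey]; exact le_sup_left)]
      congr 1
      rw [hkey, idealLen_sup_span, hcolon_q]
    have hIH := ih I J' hIJ' hI hLenIJ' e
    rw [hIH, hstep]
    exact wb_mul_succ n _ _ moduleLength_ne_bot moduleLength_ne_bot

end Main

theorem stmt4 (R : Type*) [CommRing R] [IsLocalRing R] [IsNoetherianRing R]
    (p : ℕ) (hp : p.Prime) [CharP R p]
    (hC : ∀ a : Ideal R, IsMPrimary a → ∀ x : R, ∀ e : ℕ, 1 ≤ e →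
      Submodule.colon (Ideal.fpow a (p ^ e)) (Ideal.span {x ^ p ^ e}) =
        Ideal.fpow (Submodule.colon a (Ideal.span {x})) (p ^ e))
    (I J : Ideal R) (hIJ : I ≤ J) (hI : IsMPrimary I) (e : ℕ) :
    moduleLength R (R ⧸ Ideal.fpow I (p ^ e)) =
      moduleLength R (J ⧸ Submodule.comap J.subtype I) *
        moduleLength R (R ⧸ Ideal.fpow (maximalIdeal R) (p ^ e)) +
      moduleLength R (R ⧸ Ideal.fpow J (p ^ e)) := by
  have hkerc : LinearMap.ker (I.mkQ ∘ₗ J.subtype) = Submodule.comap J.subtype I := by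
    rw [LinearMap.ker_comp, Submodule.ker_mkQ]
  have hrangec : LinearMap.range (I.mkQ ∘ₗ J.subtype) = Submodule.map I.mkQ J := by
    rw [LinearMap.range_comp, Submodule.range_subtype]
  have hLen : moduleLength R (J ⧸ Submodule.comap J.subtype I) = idealLen I J := by
    rw [← hkerc, show idealLen I J = moduleLength R ↥(Submodule.map I.mkQ J) from rfl,
      ← hrangec]
    exact moduleLength_congr (I.mkQ ∘ₗ J.subtype).quotKerEquivRange
  haveI hart : IsArtinian R (R ⧸ I) := artinian_of_isMPrimary hI
  have hfl : IsFiniteLength R ↥(Submodule.map I.mkQ J) :=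
    isFiniteLength_iff_isNoetherian_isArtinian.mpr ⟨inferInstance, inferInstance⟩
  obtain ⟨n, hn⟩ := moduleLength_coe_of_isFiniteLength hfl
  have hn' : idealLen I J = ((n : ℕ∞) : WithBot ℕ∞) := hn
  rw [hLen, hn']
  exact main_induction hp hC n I J hIJ hI hn' e
end

section
/- Let (R, m) be a Noetherian local ring of prime characteristic p, and let I ⊆ J be ideals with I m-primary. Then for every q = p^e, λ(R/I^{[q]}) ≤ λ(J/I) · λ(R/m^{[q]}) + λ(R/J^{[q]}). -/
open IsLocalRing

open Order

section OrderHelpers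
variable {α β : Type*} [PartialOrder α] [PartialOrder β]

private lemma krullDim_le_nat_iff {n : ℕ} {γ : Type*} [Preorder γ] :
    krullDim γ ≤ ((n : ℕ∞) : WithBot ℕ∞) ↔ ∀ p : LTSeries γ, p.length ≤ n := by
  constructor
  · intro h q
    exact_mod_cast (Order.LTSeries.length_le_krullDim q).trans h
  · intro h
    exact iSup_le fun q => by exact_mod_cast h q

private lemma prod_chain :
    ∀ (n : ℕ) (p : LTSeries (α × β)), p.length = n →
    ∃ (q : LTSeries α) (r : LTSeries β),
      q.last = p.last.1 ∧ r.last = p.last.2 ∧ p.length ≤ q.length + r.length := by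
  intro n
  induction n with
  | zero =>
    intro p hp
    exact ⟨RelSeries.singleton _ p.last.1, RelSeries.singleton _ p.last.2, rfl, rfl, by omega⟩
  | succ n ih =>
    intro p hp
    obtain ⟨q, r, hq, hr, hlen⟩ := ih p.eraseLast (by simp [hp])
    have hrel : p.eraseLast.last < p.last := p.eraseLast_last_rel_last (by omega)
    have hlen' : p.eraseLast.length = n := by simp [hp]
    rcases Prod.lt_iff.mp hrel with ⟨h1, h2⟩ | ⟨h1, h2⟩
    · rcases lt_or_eq_of_le h2 with h2 | h2
      · exact ⟨q.snoc p.last.1 (by rw [hq]; exact h1), r.snoc p.last.2 (by rw [hr]; exact h2),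
          by simp, by simp, by simp; omega⟩
      · exact ⟨q.snoc p.last.1 (by rw [hq]; exact h1), r, by simp, by rw [hr, h2], by simp; omega⟩
    · rcases lt_or_eq_of_le h1 with h1 | h1
      · exact ⟨q.snoc p.last.1 (by rw [hq]; exact h1), r.snoc p.last.2 (by rw [hr]; exact h2),
          by simp, by simp, by simp; omega⟩
      · exact ⟨q, r.snoc p.last.2 (by rw [hr]; exact h2), by rw [hq, h1], by simp, by simp; omega⟩

private lemma krullDim_prod_le :
    krullDim (α × β) ≤ krullDim α + krullDim β := by
  refine iSup_le fun p => ?_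
  obtain ⟨q, r, -, -, hlen⟩ := prod_chain p.length p rfl
  calc ((p.length : ℕ∞) : WithBot ℕ∞) ≤ ((q.length + r.length : ℕ) : ℕ∞) := by
        exact_mod_cast hlen
    _ = ((q.length : ℕ∞) : WithBot ℕ∞) + ((r.length : ℕ∞) : WithBot ℕ∞) := by push_cast; rfl
    _ ≤ krullDim α + krullDim β :=
        add_le_add (Order.LTSeries.length_le_krullDim q) (Order.LTSeries.length_le_krullDim r)

end OrderHelpers

section ModHelpers
variable {R M N : Type*} [CommRing R] [AddCommGroup M] [Module R M]
  [AddCommGroup N] [Module R N]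

private lemma length_le_of_surjective (f : M →ₗ[R] N) (hf : Function.Surjective f) :
    krullDim (Submodule R N) ≤ krullDim (Submodule R M) :=
  krullDim_le_of_strictMono (Submodule.comap f)
    (Monotone.strictMono_of_injective (fun _ _ h => Submodule.comap_mono h)
      (Submodule.comap_injective_of_surjective hf))

private lemma length_le_of_injective (f : M →ₗ[R] N) (hf : Function.Injective f) :
    krullDim (Submodule R M) ≤ krullDim (Submodule R N) :=
  krullDim_le_of_strictMono (Submodule.map f)
    (Monotone.strictMono_of_injective (fun _ _ h => Submodule.map_mono h)
      (Submodule.map_injective_of_injective hf))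

private lemma length_eq_of_equiv (f : M ≃ₗ[R] N) :
    krullDim (Submodule R M) = krullDim (Submodule R N) :=
  le_antisymm (length_le_of_injective f.toLinearMap f.injective)
    (length_le_of_surjective f.toLinearMap f.surjective)

private lemma length_subadditive (W : Submodule R M) :
    krullDim (Submodule R M) ≤
      krullDim (Submodule R W) + krullDim (Submodule R (M ⧸ W)) := by
  have h1 : krullDim (Submodule R M) ≤
      krullDim ({ p : Submodule R M // p ≤ W } × { p : Submodule R M // W ≤ p }) := by
    refine krullDim_le_of_strictMono
      (fun A => (⟨A ⊓ W, inf_le_right⟩, ⟨A ⊔ W, le_sup_right⟩)) ?_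
    intro a b hab
    have h := strictMono_inf_prod_sup (z := W) hab
    rw [Prod.lt_iff] at h ⊢
    rcases h with ⟨h1, h2⟩ | ⟨h1, h2⟩
    · exact Or.inl ⟨Subtype.mk_lt_mk.2 h1, Subtype.mk_le_mk.2 h2⟩
    · exact Or.inr ⟨Subtype.mk_le_mk.2 h1, Subtype.mk_lt_mk.2 h2⟩
  refine h1.trans (krullDim_prod_le.trans ?_)
  rw [krullDim_eq_of_orderIso (Submodule.MapSubtype.orderIso W).symm,
    (show krullDim {p : Submodule R M // W ≤ p} = krullDim (Submodule R (M ⧸ W)) from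
      krullDim_eq_of_orderIso (Submodule.comapMkQRelIso W).symm)]

private lemma chainlem {A B : Submodule R M} (h : A < B) {n : ℕ}
    (hB : krullDim (Submodule R B) ≤ ((n + 1 : ℕ) : ℕ∞)) :
    krullDim (Submodule R A) ≤ ((n : ℕ∞) : WithBot ℕ∞) := by
  rw [krullDim_le_nat_iff] at hB ⊢
  intro q
  have he : StrictMono (Submodule.map (Submodule.inclusion h.le)) :=
    Monotone.strictMono_of_injective (fun _ _ h => Submodule.map_mono h)
      (Submodule.map_injective_of_injective (Submodule.inclusion_injective h.le))
  have hlt : (q.map _ he).last < ⊤ := by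
    have h1 : (q.map _ he).last ≤ LinearMap.range (Submodule.inclusion h.le) :=
      LinearMap.map_le_range
    rw [Submodule.range_inclusion] at h1
    refine lt_of_le_of_lt h1 (lt_top_iff_ne_top.2 fun hc => ?_)
    exact h.not_ge (Submodule.comap_subtype_eq_top.mp hc)
  have := hB ((q.map _ he).snoc ⊤ hlt)
  have hml : (q.map _ he).length = q.length := rfl
  simp only [RelSeries.snoc_length, hml] at this
  omega

private lemma one_le_length [Nontrivial M] :
    ((1 : ℕ∞) : WithBot ℕ∞) ≤ krullDim (Submodule R M) := by
  have hbt : (⊥ : Submodule R M) < ⊤ := by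
    obtain ⟨x, hx⟩ := exists_ne (0 : M)
    refine bot_lt_iff_ne_bot.2 fun h => hx ?_
    have : x ∈ (⊤ : Submodule R M) := Submodule.mem_top
    rw [h] at this
    simpa using this
  have := Order.LTSeries.length_le_krullDim ((RelSeries.singleton _ (⊥ : Submodule R M)).snoc ⊤ hbt)
  refine le_trans (le_of_eq ?_) this
  rfl

end ModHelpers

section Fpow
variable {R : Type*} [CommRing R] {I K : Ideal R} {q : ℕ}

private lemma mem_fpow {x : R} (hx : x ∈ I) : x ^ q ∈ I.fpow q :=
  Ideal.subset_span ⟨x, hx, rfl⟩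

private lemma fpow_mono (h : I ≤ K) : I.fpow q ≤ K.fpow q :=
  Ideal.span_mono (Set.image_mono h)

private lemma fpow_le (hq : q ≠ 0) : I.fpow q ≤ I := by
  rw [Ideal.fpow, Ideal.span_le]
  rintro y ⟨x, hx, rfl⟩
  exact Ideal.pow_mem_of_mem I hx q (Nat.pos_of_ne_zero hq)

private lemma fpow_sup_span {p : ℕ} (hp : p.Prime) [CharP R p] (e : ℕ) (x : R) :
    (K ⊔ Ideal.span {x}).fpow (p ^ e) ≤ K.fpow (p ^ e) ⊔ Ideal.span {x ^ p ^ e} := by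
  haveI := Fact.mk hp
  rw [Ideal.fpow, Ideal.span_le]
  rintro y ⟨z, hz, rfl⟩
  obtain ⟨k, hk, c, hc, rfl⟩ := Submodule.mem_sup.mp hz
  obtain ⟨a, rfl⟩ := Ideal.mem_span_singleton'.mp hc
  show (k + a * x) ^ p ^ e ∈ _
  rw [add_pow_char_pow, mul_pow]
  exact Submodule.add_mem _ (Ideal.mem_sup_left (mem_fpow hk))
    (Ideal.mem_sup_right (Ideal.mem_span_singleton'.mpr ⟨a ^ p ^ e, rfl⟩))

private lemma mul_mem_fpow {T : Ideal R} {x : R} (hx : ∀ s ∈ T, s * x ∈ K) :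
    ∀ t ∈ T.fpow q, t * x ^ q ∈ K.fpow q := by
  have h : T.fpow q ≤ (K.fpow q).colon (Ideal.span {x ^ q}) := by
    rw [Ideal.fpow, Ideal.span_le]
    rintro y ⟨s, hs, rfl⟩
    rw [SetLike.mem_coe, Ideal.mem_colon_span_singleton, ← mul_pow]
    exact mem_fpow (hx s hs)
  intro t ht
  exact Ideal.mem_colon_span_singleton.mp (h ht)

end Fpow

section MainHelpers
variable {R : Type*} [CommRing R]

/-- `J / I` as a quotient of `J` is isomorphic to the image of `J` in `R / I`. -/
private noncomputable def iso1 (I J : Ideal R) :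
    (J ⧸ Submodule.comap J.subtype I) ≃ₗ[R]
      (Submodule.map (Submodule.mkQ (I : Submodule R R)) (J : Submodule R R)) := by
  let f : J →ₗ[R] R ⧸ (I : Submodule R R) :=
    (Submodule.mkQ (I : Submodule R R)).comp (Submodule.subtype J)
  have hker : LinearMap.ker f = Submodule.comap J.subtype I := by
    rw [LinearMap.ker_comp, Submodule.ker_mkQ]
  have hrange : LinearMap.range f = Submodule.map (Submodule.mkQ (I : Submodule R R)) J := by
    rw [LinearMap.range_comp, Submodule.range_subtype]
  exact (Submodule.quotEquivOfEq _ _ hker.symm).trans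
    ((f.quotKerEquivRange).trans (LinearEquiv.ofEq _ _ hrange))

variable [IsLocalRing R]

private lemma step_lemma {p : ℕ} (hp : p.Prime) [CharP R p] (e : ℕ) (K : Ideal R) (x : R)
    (hmx : ∀ s ∈ maximalIdeal R, s * x ∈ K) :
    krullDim (Submodule R (R ⧸ K.fpow (p ^ e))) ≤
      krullDim (Submodule R (R ⧸ (maximalIdeal R).fpow (p ^ e))) +
        krullDim (Submodule R (R ⧸ (K ⊔ Ideal.span {x}).fpow (p ^ e))) := by
  set q := p ^ e with hq
  set Kq := K.fpow q with hKq
  set Jq := (K ⊔ Ideal.span {x}).fpow q with hJq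
  have hle : (Kq : Submodule R R) ≤ Jq := fpow_mono le_sup_left
  set W : Submodule R (R ⧸ (Kq : Submodule R R)) :=
    Submodule.map (Submodule.mkQ (Kq : Submodule R R)) Jq with hW
  have h1 := length_subadditive W
  have e2 : ((R ⧸ (Kq : Submodule R R)) ⧸ W) ≃ₗ[R] (R ⧸ (Jq : Submodule R R)) :=
    Submodule.quotientQuotientEquivQuotient _ _ hle
  set xq : R ⧸ (Kq : Submodule R R) := Submodule.mkQ (Kq : Submodule R R) (x ^ q) with hxq
  have hWspan : W ≤ Submodule.span R {xq} := by
    have h2 : (Jq : Submodule R R) ≤ (Kq : Submodule R R) ⊔ Ideal.span {x ^ q} :=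
      fpow_sup_span hp e x
    refine le_trans (Submodule.map_mono h2) ?_
    rw [Submodule.map_sup]
    have hKbot : Submodule.map (Submodule.mkQ (Kq : Submodule R R)) Kq = ⊥ := by
      rw [eq_bot_iff]
      rintro y ⟨z, hz, rfl⟩
      rw [Submodule.mem_bot, Submodule.mkQ_apply, Submodule.Quotient.mk_eq_zero]
      exact hz
    rw [hKbot, bot_sup_eq]
    rw [show (Ideal.span {x ^ q} : Submodule R R) = Submodule.span R {x ^ q} from rfl]
    rw [Submodule.map_span, Set.image_singleton]
  have hWle : krullDim (Submodule R W) ≤ krullDim (Submodule R (Submodule.span R {xq})) :=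
    length_le_of_injective (Submodule.inclusion hWspan) (Submodule.inclusion_injective hWspan)
  have hxqmem : xq ∈ Submodule.span R {xq} := Submodule.mem_span_singleton_self xq
  set f : R →ₗ[R] Submodule.span R {xq} :=
    LinearMap.toSpanSingleton R _ (⟨xq, hxqmem⟩ : Submodule.span R {xq}) with hf
  have hker : ((maximalIdeal R).fpow q : Submodule R R) ≤ LinearMap.ker f := by
    intro t ht
    have htx : t * x ^ q ∈ Kq := mul_mem_fpow hmx t ht
    rw [LinearMap.mem_ker]
    refine Subtype.ext ?_
    show t • xq = 0
    rw [hxq, ← map_smul, smul_eq_mul]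
    rw [Submodule.mkQ_apply, Submodule.Quotient.mk_eq_zero]
    exact htx
  set g := Submodule.liftQ _ f hker with hg
  have hgs : Function.Surjective g := by
    rintro ⟨y, hy⟩
    obtain ⟨a, ha⟩ := Submodule.mem_span_singleton.mp hy
    refine ⟨Submodule.Quotient.mk a, Subtype.ext ?_⟩
    show (f a : R ⧸ (Kq : Submodule R R)) = y
    rw [hf]
    simpa [LinearMap.toSpanSingleton_apply] using ha
  have h3 := length_le_of_surjective g hgs
  calc krullDim (Submodule R (R ⧸ (Kq : Submodule R R))) ≤
        krullDim (Submodule R W) + krullDim (Submodule R ((R ⧸ (Kq : Submodule R R)) ⧸ W)) := h1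
    _ ≤ krullDim (Submodule R (R ⧸ ((maximalIdeal R).fpow q : Submodule R R))) +
        krullDim (Submodule R (R ⧸ (Jq : Submodule R R))) :=
      add_le_add (hWle.trans h3) (le_of_eq (length_eq_of_equiv e2))

end MainHelpers

section Main
variable {R : Type*} [CommRing R]

private lemma mL_ne_bot (M : Type*) [AddCommGroup M] [Module R M] :
    moduleLength R M ≠ ⊥ := by
  have h : (0 : WithBot ℕ∞) ≤ moduleLength R M := krullDim_nonneg
  intro hb
  rw [hb] at h
  simp at h

variable [IsLocalRing R] [IsNoetherianRing R]

private lemma main_lemma {p : ℕ} (hp : p.Prime) [CharP R p] (e : ℕ) (I : Ideal R) :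
    ∀ (n : ℕ) (J : Ideal R), I ≤ J →
      moduleLength R (J ⧸ Submodule.comap J.subtype I) ≤ (((n : ℕ∞)) : WithBot ℕ∞) →
      moduleLength R (R ⧸ Ideal.fpow I (p ^ e)) ≤
        (((n : ℕ∞)) : WithBot ℕ∞) *
            moduleLength R (R ⧸ Ideal.fpow (maximalIdeal R) (p ^ e)) +
          moduleLength R (R ⧸ Ideal.fpow J (p ^ e)) := by
  intro n
  induction n with
  | zero =>
    intro J hIJ h0
    have hJI : J ≤ I := by
      by_contra hc
      haveI : Nontrivial (J ⧸ Submodule.comap J.subtype I) :=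
        (fun h => Submodule.Quotient.nontrivial_iff.mpr h.ne)
          (lt_top_iff_ne_top.2 fun ht => hc (Submodule.comap_subtype_eq_top.mp ht))
      have h1 : ((1 : ℕ∞) : WithBot ℕ∞) ≤ moduleLength R (J ⧸ Submodule.comap J.subtype I) :=
        one_le_length
      have h2 := h1.trans h0
      rw [WithBot.coe_le_coe] at h2
      exact absurd h2 (by norm_num)
    have hIJ' : I = J := le_antisymm hIJ hJI
    subst hIJ'
    obtain ⟨v, hv⟩ := WithBot.ne_bot_iff_exists.mp
      (mL_ne_bot (R := R) (R ⧸ Ideal.fpow (maximalIdeal R) (p ^ e)))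
    rw [← hv]
    have h0' : (((0 : ℕ) : ℕ∞) : WithBot ℕ∞) * (v : WithBot ℕ∞) = 0 := by
      rw [show (((0 : ℕ) : ℕ∞) : WithBot ℕ∞) = ((0 : ℕ∞) : WithBot ℕ∞) by norm_num,
        ← WithBot.coe_mul, zero_mul, WithBot.coe_zero]
    rw [h0', zero_add]
  | succ n ih =>
    intro J hIJ h1
    obtain ⟨v, hv⟩ := WithBot.ne_bot_iff_exists.mp
      (mL_ne_bot (R := R) (R ⧸ Ideal.fpow (maximalIdeal R) (p ^ e)))
    by_cases hJI : J ≤ I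
    · have hIJ' : I = J := le_antisymm hIJ hJI
      subst hIJ'
      rw [← hv]
      have hnn : (0 : WithBot ℕ∞) ≤ (((n + 1 : ℕ) : ℕ∞) : WithBot ℕ∞) * (v : WithBot ℕ∞) := by
        rw [← WithBot.coe_mul, ← WithBot.coe_zero, WithBot.coe_le_coe]
        exact zero_le
      exact le_add_of_nonneg_left hnn
    · -- pick a maximal intermediate ideal K
      have hIltJ : I < J := lt_of_le_of_ne hIJ (fun h => hJI (h ▸ le_refl _))
      obtain ⟨K, ⟨hIK, hKJ⟩, hmax⟩ :=
        (set_has_maximal_iff_noetherian.mpr (inferInstance : IsNoetherian R R))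
          {K : Ideal R | I ≤ K ∧ K < J} ⟨I, le_refl I, hIltJ⟩
      obtain ⟨x, hxJ, hxK⟩ := SetLike.exists_of_lt hKJ
      have hsup : K ⊔ Ideal.span {x} = J := by
        have hle : K ⊔ Ideal.span {x} ≤ J :=
          sup_le hKJ.le (Ideal.span_le.2 (Set.singleton_subset_iff.2 hxJ))
        rcases lt_or_eq_of_le hle with hlt | heq
        · exfalso
          refine hmax _ ⟨hIK.trans le_sup_left, hlt⟩
            (lt_of_le_of_ne le_sup_left fun hK => hxK ?_)
          rw [hK]
          exact Ideal.mem_sup_right (Ideal.subset_span rfl)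
        · exact heq
      have hmx : ∀ s ∈ maximalIdeal R, s * x ∈ K := by
        intro s hs
        by_contra hsx
        have hlt1 : K < K ⊔ Ideal.span {s * x} := by
          refine lt_of_le_of_ne le_sup_left fun hK => hsx ?_
          rw [hK]
          exact Ideal.mem_sup_right (Ideal.subset_span rfl)
        have hle2 : K ⊔ Ideal.span {s * x} ≤ J :=
          sup_le hKJ.le (Ideal.span_le.2
            (Set.singleton_subset_iff.2 (Ideal.mul_mem_left J s hxJ)))
        have heq3 : K ⊔ Ideal.span {s * x} = J := by
          rcases lt_or_eq_of_le hle2 with hlt | heq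
          · exact absurd hlt1 (hmax _ ⟨hIK.trans le_sup_left, hlt⟩)
          · exact heq
        have hx' : x ∈ K ⊔ Ideal.span {s * x} := heq3.symm ▸ hxJ
        obtain ⟨k, hk, c, hc, hkc⟩ := Submodule.mem_sup.mp hx'
        obtain ⟨a, rfl⟩ := Ideal.mem_span_singleton'.mp hc
        have hu : IsUnit (1 - a * s) :=
          IsLocalRing.isUnit_one_sub_self_of_mem_nonunits _
            ((IsLocalRing.mem_maximalIdeal _).mp (Ideal.mul_mem_left _ a hs))
        have heq2 : (1 - a * s) * x = k := by
          have : k + a * (s * x) = x := hkc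
          ring_nf
          ring_nf at this
          linear_combination -this
        obtain ⟨u, hu'⟩ := hu
        have hxk : x = ↑u⁻¹ * k := by
          rw [← heq2, ← hu', ← mul_assoc, Units.inv_mul, one_mul]
        exact hxK (hxk ▸ Ideal.mul_mem_left K _ hk)
      -- length of K/I is at most n
      have hAB : Submodule.map (Submodule.mkQ (I : Submodule R R)) (K : Submodule R R) <
          Submodule.map (Submodule.mkQ (I : Submodule R R)) (J : Submodule R R) := by
        refine lt_of_le_of_ne (Submodule.map_mono hKJ.le) fun hEq => ?_
        have hc := congrArg (Submodule.comap (Submodule.mkQ (I : Submodule R R))) hEq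
        rw [Submodule.comap_map_eq, Submodule.comap_map_eq, Submodule.ker_mkQ,
          sup_eq_left.mpr hIK, sup_eq_left.mpr hIJ] at hc
        exact hKJ.ne hc
      have hBlen : krullDim (Submodule R
          (Submodule.map (Submodule.mkQ (I : Submodule R R)) (J : Submodule R R))) ≤
          (((n + 1 : ℕ) : ℕ∞) : WithBot ℕ∞) := by
        rw [← length_eq_of_equiv (iso1 I J)]
        exact h1
      have hK_len : moduleLength R (K ⧸ Submodule.comap K.subtype I) ≤
          (((n : ℕ∞)) : WithBot ℕ∞) := by
        show krullDim _ ≤ _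
        rw [length_eq_of_equiv (iso1 I K)]
        exact chainlem hAB hBlen
      have ih' := ih K hIK hK_len
      have hstep := step_lemma hp e K x hmx
      rw [hsup] at hstep
      calc moduleLength R (R ⧸ Ideal.fpow I (p ^ e)) ≤
          ((n : ℕ∞) : WithBot ℕ∞) * moduleLength R (R ⧸ Ideal.fpow (maximalIdeal R) (p ^ e)) +
            moduleLength R (R ⧸ Ideal.fpow K (p ^ e)) := ih'
        _ ≤ ((n : ℕ∞) : WithBot ℕ∞) * moduleLength R (R ⧸ Ideal.fpow (maximalIdeal R) (p ^ e)) +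
            (moduleLength R (R ⧸ Ideal.fpow (maximalIdeal R) (p ^ e)) +
              moduleLength R (R ⧸ Ideal.fpow J (p ^ e))) := add_le_add_right hstep _
        _ = (((n + 1 : ℕ) : ℕ∞) : WithBot ℕ∞) *
              moduleLength R (R ⧸ Ideal.fpow (maximalIdeal R) (p ^ e)) +
            moduleLength R (R ⧸ Ideal.fpow J (p ^ e)) := by
          rw [← hv, ← add_assoc, ← WithBot.coe_mul, ← WithBot.coe_add, ← WithBot.coe_mul]
          congr 1
          rw [WithBot.coe_inj]
          push_cast
          ring

end Main

theorem stmt5 (R : Type*) [CommRing R] [IsLocalRing R] [IsNoetherianRing R]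
    (p : ℕ) (hp : p.Prime) [CharP R p]
    (I J : Ideal R) (hIJ : I ≤ J) (hI : IsMPrimary I) (e : ℕ) :
    moduleLength R (R ⧸ Ideal.fpow I (p ^ e)) ≤
      moduleLength R (J ⧸ Submodule.comap J.subtype I) *
        moduleLength R (R ⧸ Ideal.fpow (maximalIdeal R) (p ^ e)) +
      moduleLength R (R ⧸ Ideal.fpow J (p ^ e)) := by
  obtain ⟨L, hL⟩ := WithBot.ne_bot_iff_exists.mp
    (mL_ne_bot (R := R) (J ⧸ Submodule.comap J.subtype I))
  cases L using ENat.recTopCoe with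
  | top =>
    -- the coefficient is infinite; the right-hand side is ⊤
    have hq0 : p ^ e ≠ 0 := pow_ne_zero e hp.ne_zero
    have hmlt : Ideal.fpow (maximalIdeal R) (p ^ e) < ⊤ :=
      lt_of_le_of_lt (fpow_le hq0)
        (lt_top_iff_ne_top.2 (IsLocalRing.maximalIdeal.isMaximal R).ne_top)
    haveI : Nontrivial (R ⧸ Ideal.fpow (maximalIdeal R) (p ^ e)) :=
      (fun h => Submodule.Quotient.nontrivial_iff.mpr h.ne) hmlt
    obtain ⟨v, hv⟩ := WithBot.ne_bot_iff_exists.mp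
      (mL_ne_bot (R := R) (R ⧸ Ideal.fpow (maximalIdeal R) (p ^ e)))
    have hv1 : (1 : ℕ∞) ≤ v := by
      have h1 := (one_le_length (R := R) (M := R ⧸ Ideal.fpow (maximalIdeal R) (p ^ e)))
      have hv' : ((v : ℕ∞) : WithBot ℕ∞) =
          krullDim (Submodule R (R ⧸ Ideal.fpow (maximalIdeal R) (p ^ e))) := hv
      rw [← hv', WithBot.coe_le_coe] at h1
      exact h1
    have hv0 : v ≠ 0 := by
      intro h
      rw [h] at hv1
      simp at hv1
    obtain ⟨w, hw⟩ := WithBot.ne_bot_iff_exists.mp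
      (mL_ne_bot (R := R) (R ⧸ Ideal.fpow J (p ^ e)))
    obtain ⟨u, hu⟩ := WithBot.ne_bot_iff_exists.mp
      (mL_ne_bot (R := R) (R ⧸ Ideal.fpow I (p ^ e)))
    rw [← hL, ← hv, ← hw, ← hu, ← WithBot.coe_mul, ← WithBot.coe_add, WithBot.coe_le_coe]
    have := ENat.top_mul hv0
    rw [this, top_add]
    exact le_top
  | coe n =>
    have h := main_lemma hp e I n J hIJ (le_of_eq hL.symm)
    rw [← hL]
    exact h
end

section
/- Let R be a Noetherian local ring of prime characteristic p and I a proper ideal. If (I^{[q]} : r^q) = ((I : r))^{[q]} for all r ∈ R and all q = p^e with e ≥ 1, then I is tightly closed, i.e., I* = I. -/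
open IsLocalRing

lemma fpow_le_pow {R : Type*} [CommRing R] {I J : Ideal R} (h : I ≤ J) (q : ℕ) :
    Ideal.fpow I q ≤ J ^ q := by
  rw [Ideal.fpow, Ideal.span_le]
  rintro _ ⟨a, ha, rfl⟩
  exact Ideal.pow_mem_pow (h ha) q

theorem stmt10 (R : Type*) [CommRing R] [IsLocalRing R] [IsNoetherianRing R]
    (p : ℕ) (hp : p.Prime) [CharP R p]
    (I : Ideal R) (hI : I ≠ ⊤)
    (hC : ∀ r : R, ∀ e : ℕ, 1 ≤ e →
      Submodule.colon (Ideal.fpow I (p ^ e)) (Ideal.span {r ^ p ^ e}) =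
        Ideal.fpow (Submodule.colon I (Ideal.span {r})) (p ^ e)) :
    {x : R | ∃ c : R, (∀ P ∈ minimalPrimes R, c ∉ P) ∧
        ∃ N : ℕ, ∀ e : ℕ, N ≤ e → c * x ^ p ^ e ∈ Ideal.fpow I (p ^ e)} =
      (I : Set R) := by
  ext x
  simp only [Set.mem_setOf_eq, SetLike.mem_coe]
  constructor
  · rintro ⟨c, hc, N, h⟩
    by_contra hx
    -- J = (I : x) is proper
    set J : Ideal R := Submodule.colon I (Ideal.span {x}) with hJ
    have hJtop : J ≠ ⊤ := by
      intro htop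
      apply hx
      have : (1 : R) ∈ J := htop ▸ Submodule.mem_top
      simpa using Ideal.mem_colon_span_singleton.mp this
    have hJm : J ≤ maximalIdeal R := le_maximalIdeal hJtop
    -- c ∈ m ^ n for all n
    have hcm : ∀ n : ℕ, c ∈ maximalIdeal R ^ n := by
      intro n
      have ⟨e, he1, heN, hen⟩ : ∃ e : ℕ, 1 ≤ e ∧ N ≤ e ∧ n ≤ p ^ e := by
        refine ⟨max 1 (max N n), le_max_left _ _, le_trans (le_max_left _ _) (le_max_right _ _), ?_⟩
        calc n ≤ max 1 (max N n) := le_trans (le_max_right _ _) (le_max_right _ _)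
          _ ≤ p ^ max 1 (max N n) := Nat.le_of_lt (Nat.lt_pow_self hp.one_lt)
      have hcolon : c ∈ Submodule.colon (Ideal.fpow I (p ^ e)) (Ideal.span {x ^ p ^ e}) :=
        Ideal.mem_colon_span_singleton.mpr (h e heN)
      rw [hC x e he1] at hcolon
      have : c ∈ maximalIdeal R ^ p ^ e := fpow_le_pow hJm _ hcolon
      exact Ideal.pow_le_pow_right hen this
    have hc0 : c = 0 := by
      have := Ideal.iInf_pow_eq_bot_of_isLocalRing (maximalIdeal R)
        (IsLocalRing.maximalIdeal.isMaximal R).ne_top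
      have hmem : c ∈ (⨅ n : ℕ, maximalIdeal R ^ n) := by
        simp only [Ideal.mem_iInf]; exact hcm
      rw [this] at hmem
      simpa using hmem
    -- a minimal prime exists
    obtain ⟨P, hP, -⟩ := Ideal.exists_minimalPrimes_le
      (bot_le : (⊥ : Ideal R) ≤ maximalIdeal R)
    exact hc P hP (hc0 ▸ P.zero_mem)
  · intro hx
    refine ⟨1, fun P hP h1 => ?_, 0, fun e _ => ?_⟩
    · exact hP.1.1.ne_top (Ideal.eq_top_of_isUnit_mem P h1 isUnit_one)
    · rw [one_mul]
      exact Ideal.subset_span ⟨x, hx, rfl⟩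
end

section
/- Let R be a Noetherian local ring of prime characteristic p, and suppose ((x^q) : y^q) = (((x) : y))^{[q]} for all x, y ∈ R and all q = p^e. Then for all x, y ∈ R and all q = p^e, the ordinary power ((x) : y)^q equals the Frobenius power ((x) : y)^{[q]}. -/
open IsLocalRing

theorem stmt12 (R : Type*) [CommRing R] [IsLocalRing R] [IsNoetherianRing R]
    (p : ℕ) (hp : p.Prime) [CharP R p]
    (hC : ∀ x y : R, ∀ e : ℕ,
      Submodule.colon (Ideal.span {x ^ p ^ e}) (Ideal.span {y ^ p ^ e}) =
        Ideal.fpow (Submodule.colon (Ideal.span {x}) (Ideal.span {y})) (p ^ e)) :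
    ∀ x y : R, ∀ e : ℕ,
      (Submodule.colon (Ideal.span {x}) (Ideal.span {y})) ^ (p ^ e) =
        Ideal.fpow (Submodule.colon (Ideal.span {x}) (Ideal.span {y})) (p ^ e) := by
  intro x y e
  set q := p ^ e with hq
  set I := Submodule.colon (Ideal.span {x}) (Ideal.span {y}) with hI
  apply le_antisymm
  · rw [← hC x y e]
    have h1 : I * Ideal.span {y} ≤ Ideal.span {x} := by
      rw [Ideal.mul_le]
      intro r hr s hs
      rcases Ideal.mem_span_singleton'.mp hs with ⟨c, rfl⟩
      have : r * y ∈ Ideal.span {x} := Ideal.mem_colon_span_singleton.mp hr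
      have := Ideal.mul_mem_left _ c this
      rw [show c * (r * y) = r * (c * y) by ring] at this
      exact this
    have key : I ^ q * Ideal.span {y} ^ q ≤ Ideal.span {x} ^ q := by
      rw [← mul_pow]
      exact Ideal.pow_right_mono h1 q
    intro z hz
    rw [Ideal.mem_colon_span_singleton, ← Ideal.span_singleton_pow]
    exact key (Ideal.mul_mem_mul hz (by rw [Ideal.span_singleton_pow]; exact Ideal.subset_span rfl))
  · rw [Ideal.fpow, Ideal.span_le]
    rintro _ ⟨a, ha, rfl⟩
    exact Ideal.pow_mem_pow ha q
end

section
/- Let R be a Noetherian local UFD of prime characteristic p. Then for all elements x, y ∈ R and all q = p^e (e ≥ 0), ((x^q) : y^q) = (((x) : y))^{[q]}. -/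
open IsLocalRing

lemma fpow_span_singleton_s16 {R : Type*} [CommRing R] (d : R) (q : ℕ) :
    Ideal.fpow (Ideal.span {d}) q = Ideal.span {d ^ q} := by
  apply le_antisymm
  · rw [Ideal.fpow, Ideal.span_le]
    rintro _ ⟨a, ha, rfl⟩
    rw [SetLike.mem_coe, Ideal.mem_span_singleton]
    obtain ⟨t, rfl⟩ := Ideal.mem_span_singleton.mp ha
    exact ⟨t ^ q, by simp [mul_pow]⟩
  · rw [Ideal.span_le, Set.singleton_subset_iff]
    exact Ideal.subset_span ⟨d, Ideal.subset_span rfl, rfl⟩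

lemma colon_span_eq {R : Type*} [CommRing R] [IsDomain R] [DecompositionMonoid R]
    {x y x' y' c : R} (hc : c ≠ 0) (hx : c * x' = x) (hy : c * y' = y)
    (hrel : IsRelPrime x' y') :
    Submodule.colon (Ideal.span {x}) (Ideal.span {y}) = Ideal.span {x'} := by
  ext r
  rw [Ideal.mem_colon_span_singleton, Ideal.mem_span_singleton, Ideal.mem_span_singleton]
  constructor
  · rintro ⟨t, ht⟩
    subst hx hy
    refine hrel.dvd_of_dvd_mul_left ⟨t, ?_⟩
    exact mul_left_cancel₀ hc (by linear_combination ht)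
  · rintro ⟨t, rfl⟩
    subst hx hy
    exact ⟨y' * t, by ring⟩

theorem stmt16 (R : Type*) [CommRing R] [IsLocalRing R] [IsNoetherianRing R] [IsDomain R]
    [UniqueFactorizationMonoid R]
    (p : ℕ) (hp : p.Prime) [CharP R p] :
    ∀ x y : R, ∀ e : ℕ,
      Submodule.colon (Ideal.span {x ^ p ^ e}) (Ideal.span {y ^ p ^ e}) =
        Ideal.fpow (Submodule.colon (Ideal.span {x}) (Ideal.span {y})) (p ^ e) := by
  intro x y e
  set q := p ^ e with hqdef
  have hq0 : q ≠ 0 := pow_ne_zero _ hp.ne_zero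
  by_cases hx : x = 0
  · subst hx
    rw [zero_pow hq0]
    by_cases hy : y = 0
    · subst hy
      rw [zero_pow hq0]
      have h1 : Submodule.colon (Ideal.span {(0 : R)}) (Ideal.span {(0 : R)}) = ⊤ := by
        rw [eq_top_iff]
        intro r _
        rw [Ideal.mem_colon_span_singleton, mul_zero]
        exact Ideal.zero_mem _
      rw [h1, eq_comm, Ideal.eq_top_iff_one]
      exact Ideal.subset_span ⟨1, by simp [h1], one_pow q⟩
    · have key : ∀ z : R, z ≠ 0 →
          Submodule.colon (Ideal.span {(0 : R)}) (Ideal.span {z}) = ⊥ := by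
        intro z hz
        rw [eq_bot_iff]
        intro r hr
        rw [Ideal.mem_colon_span_singleton, Ideal.mem_span_singleton, zero_dvd_iff] at hr
        rcases mul_eq_zero.mp hr with h | h
        · simpa using h
        · exact absurd h hz
      rw [key _ (pow_ne_zero q hy), key _ hy]
      rw [eq_comm, eq_bot_iff, Ideal.fpow, Ideal.span_le]
      rintro _ ⟨a, ha, rfl⟩
      simp only [Ideal.mem_bot, SetLike.mem_coe] at *
      rw [ha, zero_pow hq0]
  · obtain ⟨x', y', c, hrel, hcx, hcy⟩ :=
      UniqueFactorizationMonoid.exists_reduced_factors x hx y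
    have hc : c ≠ 0 := fun h => hx (by rw [← hcx, h, zero_mul])
    rw [colon_span_eq hc hcx hcy hrel, fpow_span_singleton_s16,
      colon_span_eq (pow_ne_zero q hc) (by rw [← mul_pow, hcx]) (by rw [← mul_pow, hcy])
        (hrel.pow)]
end

section
/- Let R be a Noetherian integral domain. Then R is a unique factorization domain if and only if the colon ideal ((x) : y) is principal for all elements x, y ∈ R. -/
open IsLocalRing

theorem stmt18 (R : Type*) [CommRing R] [IsDomain R] [IsNoetherianRing R] :
    UniqueFactorizationMonoid R ↔
      ∀ x y : R, (Submodule.colon (Ideal.span {x}) (Ideal.span {y})).IsPrincipal := by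
  constructor
  · intro hufd x y
    letI := UniqueFactorizationMonoid.toGCDMonoid R
    by_cases hg : gcd x y = 0
    · obtain ⟨rfl, rfl⟩ := (gcd_eq_zero_iff x y).1 hg
      have : Submodule.colon (Ideal.span {(0 : R)}) (Ideal.span {(0 : R)}) = ⊤ := by
        rw [eq_top_iff]
        intro r _
        rw [Ideal.mem_colon_span_singleton, mul_zero]
        exact Ideal.zero_mem _
      rw [this]
      exact ⟨⟨1, (Ideal.span_singleton_one).symm⟩⟩
    · obtain ⟨x', y', ex, ey, hu⟩ := extract_gcd x y
      refine ⟨⟨x', ?_⟩⟩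
      ext r
      rw [Ideal.mem_colon_span_singleton, Ideal.mem_span_singleton,
        Ideal.submodule_span_eq, Ideal.mem_span_singleton]
      constructor
      · intro h
        obtain ⟨c, hc⟩ := h
        have key : gcd x y * (r * y') = gcd x y * (x' * c) := by
          calc gcd x y * (r * y') = r * (gcd x y * y') := by ring
            _ = r * y := by rw [← ey]
            _ = x * c := hc
            _ = gcd x y * (x' * c) := by conv_lhs => rw [ex, mul_assoc]
        have h' : x' ∣ r * y' := ⟨c, mul_left_cancel₀ hg key⟩
        exact ((gcd_isUnit_iff_isRelPrime).1 hu).dvd_of_dvd_mul_right h'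
      · intro h
        obtain ⟨c, hc⟩ := h
        refine ⟨c * y', ?_⟩
        calc r * y = (x' * c) * (gcd x y * y') := by rw [hc, ← ey]
          _ = (gcd x y * x') * (c * y') := by ring
          _ = x * (c * y') := by rw [← ex]
  · intro H
    refine { (inferInstance : IsWellFounded R DvdNotUnit) with irreducible_iff_prime := ?_ }
    intro p
    constructor
    · intro hp
      refine ⟨hp.ne_zero, hp.not_isUnit, ?_⟩
      intro a b hab
      by_cases ha : p ∣ a
      · exact Or.inl ha
      · right
        obtain ⟨z, hz⟩ := H p a
        rw [Ideal.submodule_span_eq] at hz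
        have hpz : p ∈ Ideal.span {z} := by
          rw [← hz, Ideal.mem_colon_span_singleton, Ideal.mem_span_singleton]
          exact Dvd.intro a rfl
        have hbz : b ∈ Ideal.span {z} := by
          rw [← hz, Ideal.mem_colon_span_singleton, Ideal.mem_span_singleton, mul_comm]
          exact hab
        rw [Ideal.mem_span_singleton] at hpz hbz
        obtain ⟨w, hw⟩ := hpz
        rcases hp.isUnit_or_isUnit hw with huz | huw
        · -- z is a unit, so the colon ideal is ⊤, hence p ∣ a, contradiction
          exfalso
          apply ha
          have h1 : (1 : R) ∈ Ideal.span {z} := by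
            rw [Ideal.mem_span_singleton]
            exact huz.dvd
          rw [← hz, Ideal.mem_colon_span_singleton, one_mul, Ideal.mem_span_singleton] at h1
          exact h1
        · -- w is a unit, so z is associated to p and p ∣ b
          obtain ⟨u, rfl⟩ := huw
          obtain ⟨c, hc⟩ := hbz
          refine ⟨(↑u⁻¹ : R) * c, ?_⟩
          rw [hc, hw]
          rw [mul_assoc, ← mul_assoc (↑u : R), Units.mul_inv, one_mul]
    · exact Prime.irreducible
end
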